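/- arXiv:2103.05136 — 3 statements merged into one kernel-verified Lean document; each statement's English description precedes it below -/
import Mathlib

section
/- Let E be an economy and λ a positive simple function on T. Then an allocation x belongs to the core C(E) if and only if the allocation λx (t ↦ λ(t)x(t)) belongs to the core C(Ξ(E, λ)) of the rescaled economy. -/
open MeasureTheory
open scoped Classical

noncomputable section

/-- Dot product of two vectors in `ℝ^l`. -/
def dotp {l : ℕ} (a x : Fin l → ℝ) : ℝ := ∑ i, a i * x i

/-- Strict preference associated with a weak preference relation. -/
def StrictPref {T : Type*} {l : ℕ} (pref : T → (Fin l → ℝ) → (Fin l → ℝ) → Prop)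
    (t : T) (x y : Fin l → ℝ) : Prop :=
  pref t x y ∧ ¬ pref t y x

/-- An allocation: an integrable function into the nonnegative orthant. -/
def IsAllocation {T : Type*} [MeasurableSpace T] {l : ℕ} (μ : Measure T)
    (x : T → Fin l → ℝ) : Prop :=
  Integrable x μ ∧ ∀ t, 0 ≤ x t

/-- A feasible allocation. -/
def Feasible {T : Type*} [MeasurableSpace T] {l : ℕ} (μ : Measure T)
    (ω : T → Fin l → ℝ) (x : T → Fin l → ℝ) : Prop :=
  (∫ t, x t ∂μ) = ∫ t, ω t ∂μ

/-- Coalition `S` blocks the allocation `x`. -/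
def Blocks {T : Type*} [MeasurableSpace T] {l : ℕ} (μ : Measure T)
    (ω : T → Fin l → ℝ) (pref : T → (Fin l → ℝ) → (Fin l → ℝ) → Prop)
    (S : Set T) (x : T → Fin l → ℝ) : Prop :=
  MeasurableSet S ∧ 0 < μ S ∧ ∃ y : T → Fin l → ℝ, IsAllocation μ y ∧
    (∫ t in S, y t ∂μ) = (∫ t in S, ω t ∂μ) ∧
    ∀ t ∈ S, StrictPref pref t (y t) (x t)

/-- Membership in the core `C(E)`. -/
def InCore {T : Type*} [MeasurableSpace T] {l : ℕ} (μ : Measure T)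
    (ω : T → Fin l → ℝ) (pref : T → (Fin l → ℝ) → (Fin l → ℝ) → Prop)
    (x : T → Fin l → ℝ) : Prop :=
  IsAllocation μ x ∧ Feasible μ ω x ∧ ∀ S : Set T, ¬ Blocks μ ω pref S x

/-- `(p, x)` is a competitive equilibrium (with `p ≥ 0`). -/
def IsCompEquil {T : Type*} [MeasurableSpace T] {l : ℕ} (μ : Measure T)
    (ω : T → Fin l → ℝ) (pref : T → (Fin l → ℝ) → (Fin l → ℝ) → Prop)
    (p : Fin l → ℝ) (x : T → Fin l → ℝ) : Prop :=
  0 ≤ p ∧ IsAllocation μ x ∧ Feasible μ ω x ∧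
    ∀ᵐ t ∂μ, dotp p (x t) ≤ dotp p (ω t) ∧
      ∀ y : Fin l → ℝ, 0 ≤ y → StrictPref pref t y (x t) → dotp p (ω t) < dotp p y

/-- `x` is a competitive allocation, i.e. belongs to `W(E)`. -/
def InW {T : Type*} [MeasurableSpace T] {l : ℕ} (μ : Measure T)
    (ω : T → Fin l → ℝ) (pref : T → (Fin l → ℝ) → (Fin l → ℝ) → Prop)
    (x : T → Fin l → ℝ) : Prop :=
  ∃ p : Fin l → ℝ, IsCompEquil μ ω pref p x

/-- The rescaled measure `μ̂(S) = ∑ i, μ(S ∩ G i) / c i`. -/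
def muHat {T : Type*} [MeasurableSpace T] (μ : Measure T) {n : ℕ}
    (G : Fin n → Set T) (c : Fin n → ℝ) : Measure T :=
  ∑ i, (ENNReal.ofReal (c i))⁻¹ • μ.restrict (G i)

/-- The rescaled preferences `≽̂`, defined by `λ(t) • x ≽̂ₜ λ(t) • y ↔ x ≽ₜ y`. -/
def prefHat {T : Type*} {l : ℕ} (lam : T → ℝ)
    (pref : T → (Fin l → ℝ) → (Fin l → ℝ) → Prop) (t : T) (u v : Fin l → ℝ) : Prop :=
  pref t ((lam t)⁻¹ • u) ((lam t)⁻¹ • v)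

section Helpers

variable {T : Type*} [MeasurableSpace T] {l : ℕ}
variable {μ : Measure T} {n : ℕ} {G : Fin n → Set T} {c : Fin n → ℝ} {lam : T → ℝ}

lemma lam_pos (hGcover : (⋃ i, G i) = Set.univ) (hc : ∀ i, 0 < c i)
    (hlam : ∀ i, ∀ t ∈ G i, lam t = c i) (t : T) : 0 < lam t := by
  have ht : t ∈ ⋃ i, G i := hGcover ▸ Set.mem_univ t
  obtain ⟨i, hi⟩ := Set.mem_iUnion.mp ht
  rw [hlam i t hi]; exact hc i

lemma coeff_ne_zero (i : Fin n) : (ENNReal.ofReal (c i))⁻¹ ≠ 0 :=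
  ENNReal.inv_ne_zero.mpr ENNReal.ofReal_ne_top

lemma coeff_ne_top (hc : ∀ i, 0 < c i) (i : Fin n) : (ENNReal.ofReal (c i))⁻¹ ≠ ⊤ :=
  ENNReal.inv_ne_top.mpr (ENNReal.ofReal_pos.mpr (hc i)).ne'

lemma muHat_restrict (hG : ∀ i, MeasurableSet (G i)) {S : Set T} (hS : MeasurableSet S) :
    (muHat μ G c).restrict S = muHat (μ.restrict S) G c := by
  simp only [muHat]
  ext s hs
  rw [Measure.restrict_apply hs, Measure.finset_sum_apply, Measure.finset_sum_apply]
  refine Finset.sum_congr rfl fun i _ => ?_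
  simp only [Measure.smul_apply, Measure.restrict_apply' (hG i), Measure.restrict_apply' hS]
  congr 2
  exact Set.inter_right_comm s S (G i)

lemma muHat_pos_iff (hG : ∀ i, MeasurableSet (G i)) (hGcover : (⋃ i, G i) = Set.univ)
    (hc : ∀ i, 0 < c i) {S : Set T} :
    0 < muHat μ G c S ↔ 0 < μ S := by
  have expand : muHat μ G c S = ∑ i, (ENNReal.ofReal (c i))⁻¹ * μ (S ∩ G i) := by
    rw [muHat, Measure.finset_sum_apply]
    exact Finset.sum_congr rfl fun i _ => by
      rw [Measure.smul_apply, Measure.restrict_apply' (hG i), smul_eq_mul]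
  rw [pos_iff_ne_zero, pos_iff_ne_zero, not_iff_not.symm, not_not, not_not, expand,
    Finset.sum_eq_zero_iff]
  constructor
  · intro h
    have h' : ∀ i, μ (S ∩ G i) = 0 := fun i => by
      rcases mul_eq_zero.mp (h i (Finset.mem_univ i)) with h0 | h0
      · exact absurd h0 (coeff_ne_zero i)
      · exact h0
    have hU : S = ⋃ i, S ∩ G i := by rw [← Set.inter_iUnion, hGcover, Set.inter_univ]
    have hle : μ S ≤ 0 := calc
      μ S = μ (⋃ i, S ∩ G i) := by rw [← hU]
      _ ≤ ∑' i, μ (S ∩ G i) := measure_iUnion_le _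
      _ = 0 := by simp [h']
    exact le_antisymm hle zero_le
  · intro h i _
    rw [measure_mono_null Set.inter_subset_left h, mul_zero]

lemma integrable_muHat_iff (hG : ∀ i, MeasurableSet (G i)) (hGcover : (⋃ i, G i) = Set.univ)
    (hc : ∀ i, 0 < c i) (hlam : ∀ i, ∀ t ∈ G i, lam t = c i) (f : T → Fin l → ℝ) :
    Integrable (fun t => lam t • f t) (muHat μ G c) ↔ Integrable f μ := by
  rw [muHat, integrable_finset_sum_measure]
  have key : ∀ i, Integrable (fun t => lam t • f t)
      ((ENNReal.ofReal (c i))⁻¹ • μ.restrict (G i)) ↔ IntegrableOn f (G i) μ := by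
    intro i
    rw [integrable_smul_measure (coeff_ne_zero i) (coeff_ne_top hc i)]
    have hae : (fun t => lam t • f t) =ᵐ[μ.restrict (G i)] (fun t => c i • f t) := by
      filter_upwards [ae_restrict_mem (hG i)] with t ht
      rw [hlam i t ht]
    rw [integrable_congr hae]
    exact integrable_smul_iff (hc i).ne' f
  constructor
  · intro h
    have h1 : ∀ i, IntegrableOn f (G i) μ := fun i => (key i).mp (h i (Finset.mem_univ i))
    have h2 : IntegrableOn f (⋃ i, G i) μ := integrableOn_finite_iUnion.mpr h1
    rwa [hGcover, integrableOn_univ] at h2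
  · intro h i _
    exact (key i).mpr h.integrableOn

lemma integral_muHat (hG : ∀ i, MeasurableSet (G i))
    (hGdisj : Pairwise (Function.onFun Disjoint G)) (hGcover : (⋃ i, G i) = Set.univ)
    (hc : ∀ i, 0 < c i) (hlam : ∀ i, ∀ t ∈ G i, lam t = c i)
    (f : T → Fin l → ℝ) (hf : Integrable f μ) :
    ∫ t, lam t • f t ∂(muHat μ G c) = ∫ t, f t ∂μ := by
  have hint : ∀ i ∈ Finset.univ, Integrable (fun t => lam t • f t)
      ((ENNReal.ofReal (c i))⁻¹ • μ.restrict (G i)) := by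
    intro i _
    rw [integrable_smul_measure (coeff_ne_zero i) (coeff_ne_top hc i)]
    have hae : (fun t => c i • f t) =ᵐ[μ.restrict (G i)] (fun t => lam t • f t) := by
      filter_upwards [ae_restrict_mem (hG i)] with t ht
      rw [hlam i t ht]
    exact ((hf.integrableOn.smul (c i)).congr hae : _)
  rw [muHat, integral_finset_sum_measure hint]
  have hterm : ∀ i, (∫ t, lam t • f t ∂((ENNReal.ofReal (c i))⁻¹ • μ.restrict (G i)))
      = ∫ t in G i, f t ∂μ := by
    intro i
    rw [integral_smul_measure]
    have h1 : ∫ t in G i, lam t • f t ∂μ = ∫ t in G i, c i • f t ∂μ :=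
      setIntegral_congr_fun (hG i) (fun t ht => by rw [hlam i t ht])
    rw [h1, integral_smul, ENNReal.toReal_inv, ENNReal.toReal_ofReal (hc i).le,
      inv_smul_smul₀ (hc i).ne']
  have hsum : ∑ i, (∫ t, lam t • f t ∂((ENNReal.ofReal (c i))⁻¹ • μ.restrict (G i)))
      = ∑ i, ∫ t in G i, f t ∂μ := Finset.sum_congr rfl fun i _ => hterm i
  rw [hsum]
  have hIU : IntegrableOn f (⋃ i, G i) μ := by rw [hGcover, integrableOn_univ]; exact hf
  rw [← tsum_fintype (L := SummationFilter.unconditional _), ← integral_iUnion hG hGdisj hIU, hGcover, Measure.restrict_univ]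

lemma setIntegral_muHat (hG : ∀ i, MeasurableSet (G i))
    (hGdisj : Pairwise (Function.onFun Disjoint G)) (hGcover : (⋃ i, G i) = Set.univ)
    (hc : ∀ i, 0 < c i) (hlam : ∀ i, ∀ t ∈ G i, lam t = c i)
    {S : Set T} (hS : MeasurableSet S) (f : T → Fin l → ℝ) (hf : IntegrableOn f S μ) :
    ∫ t in S, lam t • f t ∂(muHat μ G c) = ∫ t in S, f t ∂μ := by
  rw [muHat_restrict hG hS]
  exact integral_muHat hG hGdisj hGcover hc hlam f hf

lemma smul_nonneg_iff' {a : ℝ} (h : 0 < a) (v : Fin l → ℝ) : 0 ≤ a • v ↔ 0 ≤ v := by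
  constructor
  · intro hv
    have := smul_nonneg (inv_nonneg.mpr h.le) hv
    rwa [inv_smul_smul₀ h.ne'] at this
  · exact fun hv => smul_nonneg h.le hv

lemma strictPref_hat {pref : T → (Fin l → ℝ) → (Fin l → ℝ) → Prop} {t : T}
    (h : 0 < lam t) (u v : Fin l → ℝ) :
    StrictPref (prefHat lam pref) t (lam t • u) (lam t • v) ↔ StrictPref pref t u v := by
  unfold StrictPref prefHat
  rw [inv_smul_smul₀ h.ne', inv_smul_smul₀ h.ne']

lemma blocks_hat_iff {ω : T → Fin l → ℝ} (hωint : Integrable ω μ)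
    {pref : T → (Fin l → ℝ) → (Fin l → ℝ) → Prop}
    (hG : ∀ i, MeasurableSet (G i)) (hGdisj : Pairwise (Function.onFun Disjoint G))
    (hGcover : (⋃ i, G i) = Set.univ) (hc : ∀ i, 0 < c i)
    (hlam : ∀ i, ∀ t ∈ G i, lam t = c i) (S : Set T) (x : T → Fin l → ℝ) :
    Blocks μ ω pref S x ↔
      Blocks (muHat μ G c) (fun t => lam t • ω t) (prefHat lam pref) S
        (fun t => lam t • x t) := by
  have hlp : ∀ t, 0 < lam t := lam_pos hGcover hc hlam
  constructor
  · rintro ⟨hSm, hSpos, y, ⟨hyint, hynn⟩, hyeq, hypref⟩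
    refine ⟨hSm, (muHat_pos_iff hG hGcover hc).mpr hSpos, fun t => lam t • y t,
      ⟨(integrable_muHat_iff hG hGcover hc hlam y).mpr hyint,
        fun t => (smul_nonneg_iff' (hlp t) (y t)).mpr (hynn t)⟩, ?_,
      fun t ht => (strictPref_hat (hlp t) _ _).mpr (hypref t ht)⟩
    rw [setIntegral_muHat hG hGdisj hGcover hc hlam hSm y hyint.integrableOn,
      setIntegral_muHat hG hGdisj hGcover hc hlam hSm ω hωint.integrableOn, hyeq]
  · rintro ⟨hSm, hSpos, yh, ⟨hyint, hynn⟩, hyeq, hypref⟩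
    set y : T → Fin l → ℝ := fun t => (lam t)⁻¹ • yh t with hy
    have hyh : ∀ t, lam t • y t = yh t := fun t => smul_inv_smul₀ (hlp t).ne' _
    have hfun : (fun t => lam t • y t) = yh := funext hyh
    have hyint' : Integrable y μ :=
      (integrable_muHat_iff hG hGcover hc hlam y).mp (by rwa [hfun])
    have hynn' : ∀ t, 0 ≤ y t := fun t =>
      (smul_nonneg_iff' (hlp t) (y t)).mp (by rw [hyh t]; exact hynn t)
    refine ⟨hSm, (muHat_pos_iff hG hGcover hc).mp hSpos, y, ⟨hyint', hynn'⟩, ?_,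
      fun t ht => ?_⟩
    · rw [← setIntegral_muHat hG hGdisj hGcover hc hlam hSm y hyint'.integrableOn,
        ← setIntegral_muHat hG hGdisj hGcover hc hlam hSm ω hωint.integrableOn]
      simp only [hyh]
      exact hyeq
    · have h := hypref t ht
      rw [← hyh t] at h
      exact (strictPref_hat (hlp t) _ _).mp h

end Helpers

/-- An allocation `x` belongs to the core of `E` if and only if the
rescaled allocation `λx` belongs to the core of the rescaled economy `Ξ(E, λ)`. -/
theorem core_rescaling
    {T : Type*} [MeasurableSpace T] (μ : Measure T) [IsFiniteMeasure μ]
    {l : ℕ} (hl : 1 ≤ l)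
    (ω : T → Fin l → ℝ) (hωint : Integrable ω μ) (hωnn : ∀ t, 0 ≤ ω t)
    (pref : T → (Fin l → ℝ) → (Fin l → ℝ) → Prop)
    (hcomplete : ∀ t (x y : Fin l → ℝ), 0 ≤ x → 0 ≤ y → pref t x y ∨ pref t y x)
    (htrans : ∀ t (x y z : Fin l → ℝ), 0 ≤ x → 0 ≤ y → 0 ≤ z →
      pref t x y → pref t y z → pref t x z)
    (hmeas : ∀ x y : T → Fin l → ℝ, Integrable x μ → Integrable y μ →
      (∀ t, 0 ≤ x t) → (∀ t, 0 ≤ y t) →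
      MeasurableSet {t | StrictPref pref t (x t) (y t)})
    (n : ℕ) (G : Fin n → Set T) (hGmeas : ∀ i, MeasurableSet (G i))
    (hGdisj : Pairwise (Function.onFun Disjoint G)) (hGcover : (⋃ i, G i) = Set.univ)
    (c : Fin n → ℝ) (hc : ∀ i, 0 < c i)
    (lam : T → ℝ) (hlam : ∀ i, ∀ t ∈ G i, lam t = c i)
    (x : T → Fin l → ℝ) (hx : IsAllocation μ x)
    :
    InCore μ ω pref x ↔
      InCore (muHat μ G c) (fun t => lam t • ω t) (prefHat lam pref)
        (fun t => lam t • x t) := by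
  have hlp : ∀ t, 0 < lam t := lam_pos hGcover hc hlam
  constructor
  · rintro ⟨⟨hxint, hxnn⟩, hfeas, hblock⟩
    refine ⟨⟨(integrable_muHat_iff hGmeas hGcover hc hlam x).mpr hxint,
      fun t => (smul_nonneg_iff' (hlp t) (x t)).mpr (hxnn t)⟩, ?_,
      fun S hB => hblock S
        ((blocks_hat_iff hωint hGmeas hGdisj hGcover hc hlam S x).mpr hB)⟩
    unfold Feasible at hfeas ⊢
    rw [integral_muHat hGmeas hGdisj hGcover hc hlam x hxint,
      integral_muHat hGmeas hGdisj hGcover hc hlam ω hωint]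
    exact hfeas
  · rintro ⟨_, hfeas, hblock⟩
    refine ⟨hx, ?_, fun S hB => hblock S
      ((blocks_hat_iff hωint hGmeas hGdisj hGcover hc hlam S x).mp hB)⟩
    unfold Feasible at hfeas ⊢
    rwa [integral_muHat hGmeas hGdisj hGcover hc hlam x hx.1,
      integral_muHat hGmeas hGdisj hGcover hc hlam ω hωint] at hfeas
end
end

section
/- Let p ∈ ℝ^l with p ≥ 0 componentwise, a ∈ ℝ^l with all coordinates strictly positive, and ω ∈ ℝ^l with ω ≥ 0 componentwise. Suppose x* ∈ ℝ^l_+ maximizes a·x over the budget set B = {x ∈ ℝ^l : x ≥ 0, p·x ≤ p·ω}. Then the support of x* is contained in S(p, a); that is, for every coordinate i with x*_i > 0 one has a_i p_k ≥ a_k p_i for all k = 1, …, l. -/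
noncomputable section

lemma dotp_shift {l : ℕ} (a xs : Fin l → ℝ) (i k : Fin l) (ε c : ℝ) :
    dotp a (fun j => xs j + (if j = k then c else 0) - (if j = i then ε else 0))
      = dotp a xs + a k * c - a i * ε := by
  simp [dotp, mul_add, mul_sub, Finset.sum_add_distrib, Finset.sum_sub_distrib, mul_ite]

/-- If `x*` maximizes the linear utility `a·x` over the budget set
`{x ≥ 0 : p·x ≤ p·ω}`, then the support of `x*` is contained in the set
`S(p, a) = {i : a_i p_k ≥ a_k p_i for all k}` of commodities of maximal marginal
utility. -/
theorem support_subset_maximal_marginal_utility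
    {l : ℕ} (hl : 1 ≤ l) (p a ω xs : Fin l → ℝ)
    (hp : 0 ≤ p) (ha : ∀ i, 0 < a i) (hω : 0 ≤ ω)
    (hxs_nonneg : 0 ≤ xs) (hxs_budget : dotp p xs ≤ dotp p ω)
    (hmax : ∀ x : Fin l → ℝ, 0 ≤ x → dotp p x ≤ dotp p ω → dotp a x ≤ dotp a xs) :
    ∀ i, 0 < xs i → ∀ k, a k * p i ≤ a i * p k := by
  simp only [Pi.le_def, Pi.zero_apply] at hp hω hxs_nonneg
  intro i hxi k
  by_cases hik : i = k
  · subst hik; exact le_refl _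
  by_contra h
  push_neg at h
  -- h : a i * p k < a k * p i
  have hpi : 0 < p i := by
    rcases lt_or_eq_of_le (hp i) with h' | h'
    · exact h'
    · exfalso
      rw [← h', mul_zero] at h
      have h2 : 0 ≤ a i * p k := mul_nonneg (ha i).le (hp k)
      linarith
  rcases lt_or_eq_of_le (hp k) with hpk | hpk
  · -- p k > 0 : substitute
    set c : ℝ := xs i * p i / p k with hc
    set x' : Fin l → ℝ := fun j => xs j + (if j = k then c else 0) - (if j = i then xs i else 0)
      with hx'
    have hc0 : 0 ≤ c := div_nonneg (mul_nonneg (le_of_lt hxi) hpi.le) hpk.le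
    have hx'0 : 0 ≤ x' := by
      intro j
      simp only [Pi.zero_apply]
      by_cases hjk : j = k
      · subst hjk
        have : x' j = xs j + c := by simp [hx', Ne.symm hik]
        rw [this]; linarith [hxs_nonneg j]
      · by_cases hji : j = i
        · subst hji; simp [hx', hjk]
        · simp [hx', hjk, hji]; exact hxs_nonneg j
    have hcancel : p k * c = p i * xs i := by
      rw [hc, mul_comm (p k), div_mul_cancel₀ _ hpk.ne']
      ring
    have hbud : dotp p x' ≤ dotp p ω := by
      rw [hx', dotp_shift p xs i k (xs i) c]
      linarith
    have hutil := hmax x' hx'0 hbud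
    rw [hx', dotp_shift a xs i k (xs i) c] at hutil
    have hlt : a i * xs i < a k * c := by
      rw [hc, ← mul_div_assoc, lt_div_iff₀ hpk]
      nlinarith
    linarith
  · -- p k = 0 : add to coordinate k freely
    set x' : Fin l → ℝ := fun j => xs j + (if j = k then 1 else 0) - (if j = i then 0 else 0)
      with hx'
    have hx'0 : 0 ≤ x' := by
      intro j
      simp only [Pi.zero_apply]
      by_cases hjk : j = k
      · subst hjk; simp [hx']; linarith [hxs_nonneg j]
      · simp [hx', hjk]; exact hxs_nonneg j
    have hbud : dotp p x' ≤ dotp p ω := by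
      rw [hx', dotp_shift p xs i k 0 1, ← hpk]
      linarith
    have hutil := hmax x' hx'0 hbud
    rw [hx', dotp_shift a xs i k 0 1] at hutil
    nlinarith [ha k, ha i]
end
end

section
/- Let a1 ≠ a2 be vectors in ℝ^l with all coordinates strictly positive and coordinates summing to 1, and let ω1, ω2 ∈ ℝ^l with nonnegative coordinates. Assume non-triviality: there exist x1, x2 ∈ ℝ^l with nonnegative coordinates such that x1 + x2 = ω1 + ω2, a1·x1 > a1·ω1, and a2·x2 > a2·ω2. Let x*_1 maximize a1·x over {x ∈ ℝ^l : x ≥ 0, a2·x ≤ a2·ω1} and let x*_2 maximize a2·x over {x ∈ ℝ^l : x ≥ 0, a1·x ≤ a1·ω2}. Then it is not the case that both x*_1 ≤ ω1 + ω2 and x*_2 ≤ ω1 + ω2 hold componentwise; i.e., at least one of x*_1, x*_2 is not dominated by the total endowment ω1 + ω2. -/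
/-!
At cross prices each atom demands only goods maximizing its utility-to-price ratio. A good
maximizing both `a1 i / a2 i` and `a2 i / a1 i` would force `a1 ∝ a2`, hence `a1 = a2`, so the
two demands have disjoint supports; if both were dominated by `ω1 + ω2`, so would be their sum.
Valued at `a2` this is impossible: atom 1 spends its whole budget `a2 ⬝ ω1`, while atom 2 can
afford the bundle `x2` of the non-triviality assumption and so reaches `a2 ⬝ xs2 > a2 ⬝ ω2`.
-/

noncomputable section

open Matrix

theorem dotp_eq_dotProduct {l : ℕ} (a x : Fin l → ℝ) : dotp a x = a ⬝ᵥ x := rfl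

theorem eq_of_mul_eq_mul_of_sum_eq {ι : Type*} [Fintype ι] {a b : ι → ℝ}
    (hsum : ∑ k, a k = ∑ k, b k) (hsum₀ : ∑ k, b k ≠ 0) {i : ι} (hi : a i ≠ 0)
    (h : ∀ k, a k * b i = a i * b k) : a = b := by
  have hbi : b i = a i := by
    have hsums : (∑ k, a k) * b i = a i * ∑ k, b k := by
      rw [Finset.sum_mul, Finset.mul_sum]; exact Finset.sum_congr rfl fun k _ => h k
    rw [hsum, mul_comm] at hsums
    exact mul_right_cancel₀ hsum₀ hsums
  funext k
  have hk := h k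
  rw [hbi, mul_comm] at hk
  exact mul_left_cancel₀ hi hk

/-- `x` is a demand at prices `p` for the utility `y ↦ u ⬝ᵥ y` and endowment `ω`. -/
def IsDemand {ι : Type*} [Fintype ι] (p u ω x : ι → ℝ) : Prop :=
  0 ≤ x ∧ p ⬝ᵥ x ≤ p ⬝ᵥ ω ∧ ∀ y, 0 ≤ y → p ⬝ᵥ y ≤ p ⬝ᵥ ω → u ⬝ᵥ y ≤ u ⬝ᵥ x

namespace IsDemand

variable {ι : Type*} [Fintype ι] {p u ω x : ι → ℝ}

theorem budget_eq (hd : IsDemand p u ω x) {i : ι} (hpi : 0 < p i) (hui : 0 < u i) :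
    p ⬝ᵥ x = p ⬝ᵥ ω := by
  classical
  refine le_antisymm hd.2.1 (not_lt.1 fun hlt => ?_)
  set t := (p ⬝ᵥ ω - p ⬝ᵥ x) / p i
  have ht : 0 < t := div_pos (sub_pos.2 hlt) hpi
  have hcost : p ⬝ᵥ (x + Pi.single i t) = p ⬝ᵥ ω := by
    rw [dotProduct_add, dotProduct_single, mul_div_cancel₀ _ hpi.ne']; ring
  have hval := hd.2.2 _ (add_nonneg hd.1 (Pi.single_nonneg.2 ht.le)) hcost.le
  rw [dotProduct_add, dotProduct_single] at hval
  linarith [mul_pos hui ht]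

/-- Otherwise shifting the whole holding of good `i` to good `k` at equal cost is an improvement. -/
theorem ratio_le (hd : IsDemand p u ω x) (hp : ∀ i, 0 < p i) {i : ι} (hi : x i ≠ 0) (k : ι) :
    u k * p i ≤ u i * p k := by
  classical
  by_contra! hlt
  have hxi : 0 < x i := lt_of_le_of_ne (hd.1 i) (Ne.symm hi)
  set t := p i * x i / p k
  have ht : 0 ≤ t := div_nonneg (mul_nonneg (hp i).le hxi.le) (hp k).le
  have htk : t * p k = p i * x i := div_mul_cancel₀ _ (hp k).ne'
  have hy : 0 ≤ x - Pi.single i (x i) + Pi.single k t := by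
    refine add_nonneg (fun j => ?_) (Pi.single_nonneg.2 ht)
    by_cases hj : j = i
    · simp [hj]
    · simpa [Pi.single_apply, hj] using hd.1 j
  have hcost : p ⬝ᵥ (x - Pi.single i (x i) + Pi.single k t) = p ⬝ᵥ x := by
    rw [dotProduct_add, dotProduct_sub, dotProduct_single, dotProduct_single,
      mul_div_cancel₀ _ (hp k).ne']; ring
  have hval := hd.2.2 _ hy (hcost ▸ hd.2.1)
  rw [dotProduct_add, dotProduct_sub, dotProduct_single, dotProduct_single] at hval
  have hgain : u k * t ≤ u i * x i := by linarith
  have : u k * p i * x i ≤ u i * p k * x i :=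
    calc u k * p i * x i = u k * t * p k := by rw [mul_assoc (u k) t, htk, mul_assoc]
      _ ≤ u i * x i * p k := mul_le_mul_of_nonneg_right hgain (hp k).le
      _ = u i * p k * x i := by ring
  linarith [mul_lt_mul_of_pos_right hlt hxi]

theorem support_disjoint {x' ω' : ι → ℝ} (hd : IsDemand p u ω x) (hd' : IsDemand u p ω' x')
    (hp : ∀ i, 0 < p i) (hu : ∀ i, 0 < u i) (hsum : ∑ i, u i = ∑ i, p i)
    (hne : u ≠ p) (i : ι) : x i = 0 ∨ x' i = 0 := by
  by_contra! h
  have hsum₀ : ∑ k, p k ≠ 0 := (Finset.sum_pos (fun k _ => hp k) ⟨i, Finset.mem_univ i⟩).ne'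
  refine hne (eq_of_mul_eq_mul_of_sum_eq hsum hsum₀ (hu i).ne' fun k => ?_)
  exact le_antisymm (hd.ratio_le hp h.1 k) (by linarith [hd'.ratio_le hu h.2 k])

end IsDemand

theorem demand_infeasible_at_cross_prices_general
    {l : ℕ} (a1 a2 ω1 ω2 : Fin l → ℝ)
    (ha1pos : ∀ i, 0 < a1 i) (ha2pos : ∀ i, 0 < a2 i)
    (ha1sum : ∑ i, a1 i = 1) (ha2sum : ∑ i, a2 i = 1) (hne : a1 ≠ a2)
    (hnontriv : ∃ x1 x2 : Fin l → ℝ, 0 ≤ x1 ∧ 0 ≤ x2 ∧ x1 + x2 = ω1 + ω2 ∧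
      dotp a1 ω1 < dotp a1 x1 ∧ dotp a2 ω2 < dotp a2 x2)
    (xs1 xs2 : Fin l → ℝ)
    (hxs1_nonneg : 0 ≤ xs1) (hxs1_budget : dotp a2 xs1 ≤ dotp a2 ω1)
    (hxs1_max : ∀ x : Fin l → ℝ, 0 ≤ x → dotp a2 x ≤ dotp a2 ω1 →
      dotp a1 x ≤ dotp a1 xs1)
    (hxs2_nonneg : 0 ≤ xs2) (hxs2_budget : dotp a1 xs2 ≤ dotp a1 ω2)
    (hxs2_max : ∀ x : Fin l → ℝ, 0 ≤ x → dotp a1 x ≤ dotp a1 ω2 →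
      dotp a2 x ≤ dotp a2 xs2) :
    ¬ (xs1 ≤ ω1 + ω2 ∧ xs2 ≤ ω1 + ω2) := by
  rintro ⟨h1, h2⟩
  obtain ⟨x1, x2, -, hx2, hx, hgt1, hgt2⟩ := hnontriv
  simp only [dotp_eq_dotProduct] at hgt1 hgt2
  have hd1 : IsDemand a2 a1 ω1 xs1 := ⟨hxs1_nonneg, hxs1_budget, hxs1_max⟩
  have hd2 : IsDemand a1 a2 ω2 xs2 := ⟨hxs2_nonneg, hxs2_budget, hxs2_max⟩
  obtain ⟨i, -⟩ := Function.ne_iff.1 hne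
  have hbind : a2 ⬝ᵥ xs1 = a2 ⬝ᵥ ω1 := hd1.budget_eq (ha2pos i) (ha1pos i)
  have hsplit : a1 ⬝ᵥ x1 + a1 ⬝ᵥ x2 = a1 ⬝ᵥ ω1 + a1 ⬝ᵥ ω2 := by
    rw [← dotProduct_add, ← dotProduct_add, hx]
  have hgain : a2 ⬝ᵥ ω2 < a2 ⬝ᵥ xs2 := hgt2.trans_le (hd2.2.2 x2 hx2 (by linarith))
  have hdisj := hd1.support_disjoint hd2 ha2pos ha1pos (ha1sum.trans ha2sum.symm) hne
  have hle : xs1 + xs2 ≤ ω1 + ω2 := fun k => by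
    rcases hdisj k with h | h
    · simpa [h] using h2 k
    · simpa [h] using h1 k
  have htotal := dotProduct_le_dotProduct_of_nonneg_left hle fun k => (ha2pos k).le
  rw [dotProduct_add, dotProduct_add] at htotal
  linarith

/-- In a non-trivial two-atom linear economy, if `x*₁` is atom 1's
demand at prices `p = a2` and `x*₂` is atom 2's demand at prices `p = a1`, then at least
one of `x*₁, x*₂` is not dominated componentwise by the total endowment `ω1 + ω2`. -/
theorem demand_infeasible_at_cross_prices
    {l : ℕ} (hl : 1 ≤ l) (a1 a2 ω1 ω2 : Fin l → ℝ)
    (ha1pos : ∀ i, 0 < a1 i) (ha2pos : ∀ i, 0 < a2 i)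
    (ha1sum : ∑ i, a1 i = 1) (ha2sum : ∑ i, a2 i = 1) (hne : a1 ≠ a2)
    (hω1 : 0 ≤ ω1) (hω2 : 0 ≤ ω2)
    (hnontriv : ∃ x1 x2 : Fin l → ℝ, 0 ≤ x1 ∧ 0 ≤ x2 ∧ x1 + x2 = ω1 + ω2 ∧
      dotp a1 ω1 < dotp a1 x1 ∧ dotp a2 ω2 < dotp a2 x2)
    (xs1 xs2 : Fin l → ℝ)
    (hxs1_nonneg : 0 ≤ xs1) (hxs1_budget : dotp a2 xs1 ≤ dotp a2 ω1)
    (hxs1_max : ∀ x : Fin l → ℝ, 0 ≤ x → dotp a2 x ≤ dotp a2 ω1 →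
      dotp a1 x ≤ dotp a1 xs1)
    (hxs2_nonneg : 0 ≤ xs2) (hxs2_budget : dotp a1 xs2 ≤ dotp a1 ω2)
    (hxs2_max : ∀ x : Fin l → ℝ, 0 ≤ x → dotp a1 x ≤ dotp a1 ω2 →
      dotp a2 x ≤ dotp a2 xs2) :
    ¬ (xs1 ≤ ω1 + ω2 ∧ xs2 ≤ ω1 + ω2) :=
  demand_infeasible_at_cross_prices_general a1 a2 ω1 ω2 ha1pos ha2pos ha1sum ha2sum hne hnontriv xs1
    xs2 hxs1_nonneg hxs1_budget hxs1_max hxs2_nonneg hxs2_budget hxs2_max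
end
end
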